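/- arXiv:1910.01829 — 5 statements merged into one kernel-verified Lean document; each statement's English description precedes it below -/
import Mathlib

section
/- Every real number λ with 1/2 ≤ |λ| ≤ 1 is an eigenvalue of some 3×3 doubly stochastic matrix of the form A_x = [[0, x, 1−x], [x, 1−x, 0], [1−x, 0, x]] with x ∈ [1/2, 1]. -/
def IsDoublyStochastic {n : ℕ} (A : Matrix (Fin n) (Fin n) ℝ) : Prop :=
  (∀ i j, 0 ≤ A i j) ∧ (∀ i, ∑ j, A i j = 1) ∧ (∀ j, ∑ i, A i j = 1)

def Amat (x : ℝ) : Matrix (Fin 3) (Fin 3) ℝ :=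
  !![0, x, 1 - x; x, 1 - x, 0; 1 - x, 0, x]

/-! The non-trivial eigenvalues of `Amat x` are `±√(1 - 3x + 3x²)`, and `1 - 3x + 3x²` runs
continuously from `1/4` to `1` as `x` runs over `[1/2, 1]`; so by the intermediate value theorem
every `λ` with `1/4 ≤ λ² ≤ 1` is a non-trivial eigenvalue of some `Amat x`. -/

theorem Amat_isDoublyStochastic {x : ℝ} (hx₀ : 0 ≤ x) (hx₁ : x ≤ 1) :
    IsDoublyStochastic (Amat x) := by
  refine ⟨fun i j => ?_, fun i => ?_, fun j => ?_⟩
  · fin_cases i <;> fin_cases j <;> simp [Amat] <;> linarith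
  · fin_cases i <;> simp [Amat, Fin.sum_univ_three]
  · fin_cases j <;> simp [Amat, Fin.sum_univ_three]

/-- The eigenvector is orthogonal to `(1, 1, 1)`; its first two entries are read off the second
row of `Amat x - λ`. -/
theorem Amat_mulVec_eigenvector {x lam : ℝ} (hlam : lam ^ 2 = 1 - 3 * x + 3 * x ^ 2) :
    (Amat x).mulVec ![lam - 1 + x, x, 1 - 2 * x - lam] =
      lam • ![lam - 1 + x, x, 1 - 2 * x - lam] := by
  funext i
  fin_cases i <;> simp [Amat, Matrix.mulVec, dotProduct, Fin.sum_univ_three]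
  · linear_combination -hlam
  · ring
  · linear_combination hlam

theorem exists_mem_Icc_sq_eq {lam : ℝ} (hlam : lam ^ 2 ∈ Set.Icc (1 / 4 : ℝ) 1) :
    ∃ x ∈ Set.Icc (1 / 2 : ℝ) 1, lam ^ 2 = 1 - 3 * x + 3 * x ^ 2 := by
  have hcont : ContinuousOn (fun x : ℝ => 1 - 3 * x + 3 * x ^ 2) (Set.Icc (1 / 2) 1) := by
    fun_prop
  obtain ⟨x, hx, hfx⟩ := intermediate_value_Icc (by norm_num) hcont (by norm_num; exact hlam)
  exact ⟨x, hx, hfx.symm⟩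

theorem stmt1 (lam : ℝ) (h1 : 1 / 2 ≤ |lam|) (h2 : |lam| ≤ 1) :
    ∃ x ∈ Set.Icc (1 / 2 : ℝ) 1,
      IsDoublyStochastic (Amat x) ∧
      ∃ v : Fin 3 → ℝ, v ≠ 0 ∧ (Amat x).mulVec v = lam • v := by
  have hsq : lam ^ 2 ∈ Set.Icc (1 / 4 : ℝ) 1 := by
    rw [← sq_abs]
    constructor <;> nlinarith [abs_nonneg lam]
  obtain ⟨x, hx, hlam⟩ := exists_mem_Icc_sq_eq hsq
  refine ⟨x, hx, Amat_isDoublyStochastic (by linarith [hx.1]) hx.2, _, fun hv => ?_,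
    Amat_mulVec_eigenvector hlam⟩
  have hx₀ : x = 0 := by simpa using congrFun hv 1
  linarith [hx.1]
end

section
/- The eigenvalue region of doubly stochastic matrices is star-shaped with respect to 0: if λ ≠ 1 is an eigenvalue of an n×n doubly stochastic matrix D, then for every t ∈ [0,1], tλ is an eigenvalue of the doubly stochastic matrix tD + (1−t)(1/n)J, where J is the all-ones matrix. -/
/-- The all-ones matrix. -/
def Jmat (n : ℕ) : Matrix (Fin n) (Fin n) ℝ := Matrix.of fun _ _ => (1 : ℝ)

/-!
The columns of `D` sum to `1`, so `1ᵀ (D v) = 1ᵀ v`; with `D v = λ v` and `λ ≠ 1` this forces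
`1ᵀ v = 0`, i.e. `J v = 0`. Hence `(t D + (1 - t) J / n) v = t λ v`. The matrix `J / n` is doubly
stochastic and doubly stochastic matrices form a convex set, which gives the first claim.
-/

open Matrix Complex

lemma isDoublyStochastic_iff_mem_doublyStochastic {n : ℕ} {A : Matrix (Fin n) (Fin n) ℝ} :
    IsDoublyStochastic A ↔ A ∈ doublyStochastic ℝ (Fin n) :=
  mem_doublyStochastic_iff_sum.symm

lemma IsDoublyStochastic.convex_combination {n : ℕ} {A B : Matrix (Fin n) (Fin n) ℝ}
    (hA : IsDoublyStochastic A) (hB : IsDoublyStochastic B) {t : ℝ} (ht : t ∈ Set.Icc (0 : ℝ) 1) :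
    IsDoublyStochastic (t • A + (1 - t) • B) := by
  rw [isDoublyStochastic_iff_mem_doublyStochastic] at *
  exact convex_doublyStochastic hA hB ht.1 (sub_nonneg.2 ht.2) (add_sub_cancel t 1)

lemma isDoublyStochastic_inv_smul_Jmat (n : ℕ) : IsDoublyStochastic ((n : ℝ)⁻¹ • Jmat n) := by
  have sum_inv (k : Fin n) : ∑ _ : Fin n, (n : ℝ)⁻¹ = 1 := by
    simp [(Fin.pos k).ne']
  exact ⟨fun _ _ => by simp [Jmat], fun i => by simpa [Jmat] using sum_inv i,
    fun j => by simpa [Jmat] using sum_inv j⟩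

lemma sum_eq_zero_of_mulVec_eq_smul {R ι : Type*} [CommRing R] [IsDomain R] [Fintype ι]
    {A : Matrix ι ι R} (hA : 1 ᵥ* A = 1) {μ : R} (hμ : μ ≠ 1) {v : ι → R}
    (hv : A *ᵥ v = μ • v) : ∑ i, v i = 0 := by
  have h : μ * (1 ⬝ᵥ v) = 1 ⬝ᵥ v := by
    rw [← smul_eq_mul, ← dotProduct_smul, ← hv, dotProduct_mulVec, hA]
  rw [← one_dotProduct]
  exact (mul_eq_zero.1 (by linear_combination h : (μ - 1) * (1 ⬝ᵥ v) = 0)).resolve_left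
    (sub_ne_zero.2 hμ)

lemma one_vecMul_map_ofReal {n : ℕ} {D : Matrix (Fin n) (Fin n) ℝ} (hD : IsDoublyStochastic D) :
    1 ᵥ* D.map ofReal = 1 := by
  ext j
  simp [vecMul, dotProduct, ← ofReal_sum, hD.2.2 j]

lemma map_ofReal_smul_Jmat_mulVec {n : ℕ} (c : ℝ) {v : Fin n → ℂ} (hv : ∑ i, v i = 0) :
    (c • Jmat n).map ofReal *ᵥ v = 0 := by
  ext i
  simp [mulVec, dotProduct, Jmat, ← Finset.mul_sum, hv]

lemma map_ofReal_smul_add_mulVec {n : ℕ} {A B : Matrix (Fin n) (Fin n) ℝ} {μ : ℂ}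
    {v : Fin n → ℂ} (hA : A.map ofReal *ᵥ v = μ • v) (hB : B.map ofReal *ᵥ v = 0) (t : ℝ) :
    (t • A + B).map ofReal *ᵥ v = ((t : ℂ) * μ) • v := by
  have : (t • A + B).map ofReal = (t : ℂ) • A.map ofReal + B.map ofReal := by
    ext i j; simp
  rw [this, add_mulVec, smul_mulVec, hA, hB, add_zero, smul_smul]

theorem stmt3_general {n : ℕ} (D : Matrix (Fin n) (Fin n) ℝ)
    (hD : IsDoublyStochastic D) (lam : ℂ) (hlam : lam ≠ 1)
    (heig : ∃ v : Fin n → ℂ, v ≠ 0 ∧ (D.map (fun r => (r : ℂ))).mulVec v = lam • v)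
    (t : ℝ) (ht : t ∈ Set.Icc (0 : ℝ) 1) :
    IsDoublyStochastic (t • D + (1 - t) • ((n : ℝ)⁻¹ • Jmat n)) ∧
    ∃ v : Fin n → ℂ, v ≠ 0 ∧
      ((t • D + (1 - t) • ((n : ℝ)⁻¹ • Jmat n)).map (fun r => (r : ℂ))).mulVec v
        = ((t : ℂ) * lam) • v := by
  refine ⟨hD.convex_combination (isDoublyStochastic_inv_smul_Jmat n) ht, ?_⟩
  obtain ⟨v, hv0, hDv⟩ := heig
  have hsum : ∑ i, v i = 0 := sum_eq_zero_of_mulVec_eq_smul (one_vecMul_map_ofReal hD) hlam hDv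
  refine ⟨v, hv0, map_ofReal_smul_add_mulVec hDv ?_ t⟩
  rw [smul_smul]
  exact map_ofReal_smul_Jmat_mulVec _ hsum

theorem stmt3 {n : ℕ} (hn : 0 < n) (D : Matrix (Fin n) (Fin n) ℝ)
    (hD : IsDoublyStochastic D) (lam : ℂ) (hlam : lam ≠ 1)
    (heig : ∃ v : Fin n → ℂ, v ≠ 0 ∧ (D.map (fun r => (r : ℂ))).mulVec v = lam • v)
    (t : ℝ) (ht : t ∈ Set.Icc (0 : ℝ) 1) :
    IsDoublyStochastic (t • D + (1 - t) • ((n : ℝ)⁻¹ • Jmat n)) ∧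
    ∃ v : Fin n → ℂ, v ≠ 0 ∧
      ((t • D + (1 - t) • ((n : ℝ)⁻¹ • Jmat n)).map (fun r => (r : ℂ))).mulVec v
        = ((t : ℂ) * lam) • v :=
  stmt3_general D hD lam hlam heig t ht
end

section
/- If all eigenvalues of a doubly stochastic matrix D lie on the unit circle |z| = 1, then D is a permutation matrix. -/
open Polynomial

/-!
Since every eigenvalue has modulus one, `|det D| = 1`. Expanding `∏ⱼ ∑ᵢ D i j = 1` as a sum over
all maps `f : ι → ι` of the nonnegative terms `∏ⱼ D (f j) j`, the terms with `f` a permutation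
already sum to at least `|det D| = 1`, so every non-injective `f` picks a zero entry. Hence each
column has a single nonzero entry, equal to `1`, and these sit in distinct rows.
-/

open Finset Function

namespace Matrix

variable {ι : Type*} [Fintype ι] [DecidableEq ι]

theorem abs_det_eq_one_of_forall_norm_root_charpoly_eq_one {A : Matrix ι ι ℝ}
    (h : ∀ μ ∈ (A.map (fun r => (r : ℂ))).charpoly.roots, ‖μ‖ = 1) : |A.det| = 1 := by
  have hnorm : ‖(A.map (fun r => (r : ℂ))).det‖ = 1 := by
    rw [det_eq_prod_roots_charpoly, ← normHom_apply, map_multiset_prod]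
    exact Multiset.prod_eq_one fun x hx => by
      obtain ⟨μ, hμ, rfl⟩ := Multiset.mem_map.mp hx
      exact h μ hμ
  have hcast : ((A.det : ℝ) : ℂ) = (A.map (fun r => (r : ℂ))).det :=
    Complex.ofRealHom.map_det A
  rwa [← hcast, Complex.norm_real, Real.norm_eq_abs] at hnorm

theorem sum_prod_apply_eq_one_of_sum_col_eq_one {R : Type*} [CommSemiring R]
    {A : Matrix ι ι R} (hcol : ∀ j, ∑ i, A i j = 1) :
    ∑ f : ι → ι, ∏ i, A (f i) i = 1 := by
  rw [← Fintype.prod_sum (fun i j => A j i)]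
  simp [hcol]

/-- Replacing `f i` by another nonzero position `j` of column `i` collides with the `k` for
which `f k = j`. -/
theorem eq_of_apply_ne_zero {R : Type*} [Zero R] {A : Matrix ι ι R}
    (hsel : ∀ f : ι → ι, (∀ i, A (f i) i ≠ 0) → Injective f)
    {f : ι → ι} (hf : ∀ i, A (f i) i ≠ 0) {i j : ι} (hij : A j i ≠ 0) : j = f i := by
  by_contra hne
  obtain ⟨k, rfl⟩ := Finite.surjective_of_injective (hsel f hf) j
  have hki : k ≠ i := by rintro rfl; exact hne rfl
  have hg : ∀ l, A (update f i (f k) l) l ≠ 0 := by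
    intro l
    by_cases hl : l = i
    · subst hl; rwa [update_self]
    · rw [update_of_ne hl]; exact hf l
  apply hki (hsel _ hg _)
  rw [update_of_ne hki, update_self]

variable {R : Type*} [CommRing R] [LinearOrder R] [IsStrictOrderedRing R] {A : Matrix ι ι R}

theorem abs_det_le_sum_perm_prod (hA : ∀ i j, 0 ≤ A i j) :
    |A.det| ≤ ∑ σ : Equiv.Perm ι, ∏ i, A (σ i) i := by
  rw [det_apply]
  refine (abs_sum_le_sum_abs _ _).trans (sum_le_sum fun σ _ => ?_)
  rw [Units.smul_def, abs_zsmul, Int.isUnit_iff_abs_eq.mp σ.sign.isUnit, one_smul,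
    abs_of_nonneg (prod_nonneg fun i _ => hA _ _)]

theorem sum_perm_prod_add_prod_le_sum_prod (hA : ∀ i j, 0 ≤ A i j) {f : ι → ι}
    (hf : ¬Injective f) :
    ∑ σ : Equiv.Perm ι, ∏ i, A (σ i) i + ∏ i, A (f i) i ≤ ∑ g : ι → ι, ∏ i, A (g i) i := by
  let perms := (univ : Finset (Equiv.Perm ι)).map ⟨(⇑), DFunLike.coe_injective⟩
  have hf_notMem : f ∉ perms := by
    simp only [perms, mem_map, mem_univ, true_and, Embedding.coeFn_mk, not_exists]
    rintro σ rfl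
    exact hf σ.injective
  calc ∑ σ : Equiv.Perm ι, ∏ i, A (σ i) i + ∏ i, A (f i) i
      = ∑ g ∈ insert f perms, ∏ i, A (g i) i := by
        rw [sum_insert hf_notMem, sum_map, add_comm]; rfl
    _ ≤ ∑ g : ι → ι, ∏ i, A (g i) i :=
        sum_le_univ_sum_of_nonneg fun g => prod_nonneg fun i _ => hA _ _

theorem injective_of_forall_apply_ne_zero (hA : ∀ i j, 0 ≤ A i j)
    (hcol : ∀ j, ∑ i, A i j = 1) (hdet : 1 ≤ |A.det|) {f : ι → ι} (hf : ∀ i, A (f i) i ≠ 0) :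
    Injective f := by
  by_contra hinj
  have hprod_pos : 0 < ∏ i, A (f i) i :=
    prod_pos fun i _ => (hA _ _).lt_of_ne' (hf i)
  have hsum := sum_perm_prod_add_prod_le_sum_prod hA hinj
  rw [sum_prod_apply_eq_one_of_sum_col_eq_one hcol] at hsum
  linarith [abs_det_le_sum_perm_prod hA]

theorem exists_perm_eq_of_one_le_abs_det (hA : ∀ i j, 0 ≤ A i j)
    (hcol : ∀ j, ∑ i, A i j = 1) (hdet : 1 ≤ |A.det|) :
    ∃ σ : Equiv.Perm ι, ∀ i j, A i j = if σ i = j then 1 else 0 := by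
  have hsel : ∀ f : ι → ι, (∀ i, A (f i) i ≠ 0) → Injective f :=
    fun _ => injective_of_forall_apply_ne_zero hA hcol hdet
  have hcol_ne : ∀ j, ∃ i, A i j ≠ 0 := fun j => by
    obtain ⟨i, -, hi⟩ := exists_ne_zero_of_sum_ne_zero (by rw [hcol j]; exact one_ne_zero)
    exact ⟨i, hi⟩
  choose f hf using hcol_ne
  have hzero : ∀ i j, i ≠ f j → A i j = 0 := fun i j hi =>
    not_not.mp (mt (eq_of_apply_ne_zero hsel hf) hi)
  have hone : ∀ j, A (f j) j = 1 := fun j => by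
    rw [← hcol j, sum_eq_single (f j) (fun i _ => hzero i j) (absurd (mem_univ _))]
  let e := Equiv.ofBijective f (Finite.injective_iff_bijective.mp (hsel f hf))
  refine ⟨e.symm, fun i j => ?_⟩
  by_cases hi : i = f j
  · rw [if_pos (e.symm_apply_eq.mpr hi), hi, hone j]
  · rw [if_neg (mt e.symm_apply_eq.mp hi), hzero i j hi]

end Matrix

theorem stmt6 {n : ℕ} (D : Matrix (Fin n) (Fin n) ℝ) (hD : IsDoublyStochastic D)
    (h : ∀ μ ∈ (D.map (fun r => (r : ℂ))).charpoly.roots, ‖μ‖ = 1) :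
    ∃ σ : Equiv.Perm (Fin n), ∀ i j, D i j = if σ i = j then 1 else 0 := by
  obtain ⟨hnonneg, -, hcol⟩ := hD
  exact D.exists_perm_eq_of_one_le_abs_det hnonneg hcol
    (D.abs_det_eq_one_of_forall_norm_root_charpoly_eq_one h).ge
end

section
/- The complex number −1/2 + (√3/2)i is an eigenvalue of a 4×4 doubly stochastic matrix A if and only if A is a permutation matrix corresponding to a permutation of cycle type (3)+(1) (i.e., a 3-cycle fixing one point). -/
open Finset Equiv
open scoped Matrix

theorem eq_of_norm_le_of_sum_smul_eq {E ι : Type*} [NormedAddCommGroup E]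
    [InnerProductSpace ℝ E] [Fintype ι] {w : ι → ℝ} {y : ι → E} {c : E} (hw : ∀ i, 0 ≤ w i)
    (hw1 : ∑ i, w i = 1) (hy : ∀ i, ‖y i‖ ≤ ‖c‖) (hc : ∑ i, w i • y i = c) {j : ι}
    (hj : w j ≠ 0) : y j = c := by
  have hterm : ∀ i, w i * ‖y i - c‖ ^ 2 ≤ w i * (2 * ‖c‖ ^ 2 - 2 * inner ℝ (y i) c) := by
    intro i
    refine mul_le_mul_of_nonneg_left ?_ (hw i)
    rw [norm_sub_sq_real]
    nlinarith [hy i, norm_nonneg (y i), norm_nonneg c]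
  have hsum : ∑ i, w i * (2 * ‖c‖ ^ 2 - 2 * inner ℝ (y i) c) = 0 := by
    have hinner : ∑ i, w i * inner ℝ (y i) c = ‖c‖ ^ 2 := by
      simp only [← real_inner_smul_left, ← sum_inner, hc, real_inner_self_eq_norm_sq]
    simp only [mul_sub, sum_sub_distrib, ← sum_mul, hw1, mul_left_comm _ (2 : ℝ), ← mul_sum,
      hinner]
    ring
  have hzero : ∑ i, w i * ‖y i - c‖ ^ 2 = 0 :=
    le_antisymm (hsum ▸ sum_le_sum fun i _ => hterm i)
      (sum_nonneg fun i _ => mul_nonneg (hw i) (sq_nonneg _))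
  have := (sum_eq_zero_iff_of_nonneg fun i _ => mul_nonneg (hw i) (sq_nonneg _)).1 hzero j
    (mem_univ j)
  simpa [hj, sub_eq_zero] using this

section Stochastic

variable {ι : Type*} [Fintype ι] {f : ι → ℝ}

theorem eq_zero_of_sum_eq_one_of_eq_one (hf : ∀ i, 0 ≤ f i) (h1 : ∑ i, f i = 1) {j k : ι}
    (hj : f j = 1) (hkj : k ≠ j) : f k = 0 := by
  classical
  have hpair : f k + f j ≤ 1 := by
    rw [← h1, ← sum_pair hkj]
    exact sum_le_sum_of_subset_of_nonneg (subset_univ _) fun i _ _ => hf i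
  linarith [hf k]

theorem eq_one_of_sum_eq_one_of_support {k : ι} (h1 : ∑ i, f i = 1)
    (hk : ∀ j, f j ≠ 0 → j = k) : f k = 1 := by
  rwa [sum_eq_single k (fun j _ hj => not_imp_comm.1 (hk j) hj) (by simp)] at h1

end Stochastic

namespace IsDoublyStochastic

variable {n : ℕ} {A : Matrix (Fin n) (Fin n) ℝ}

theorem apply_eq_ite_of_forall_ne (hA : IsDoublyStochastic A) (σ : Perm (Fin n)) (d : Fin n)
    (hσ : ∀ i ≠ d, A i (σ i) = 1) (i j : Fin n) : A i j = if σ i = j then 1 else 0 := by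
  obtain ⟨hnonneg, hrow, hcol⟩ := hA
  have hd : A d (σ d) = 1 := by
    refine eq_one_of_sum_eq_one_of_support (hrow d) fun j hj => ?_
    by_contra hjd
    have hσj : σ.symm j ≠ d := fun h => hjd (by rw [← h, apply_symm_apply])
    refine hj (eq_zero_of_sum_eq_one_of_eq_one (f := fun i => A i j) (fun i => hnonneg i j)
      (hcol j) ?_ (Ne.symm hσj))
    simpa using hσ _ hσj
  have hall : ∀ i, A i (σ i) = 1 := fun i => by
    by_cases hi : i = d
    · exact hi ▸ hd
    · exact hσ i hi
  split_ifs with h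
  · exact h ▸ hall i
  · exact eq_zero_of_sum_eq_one_of_eq_one (hnonneg i) (hrow i) (hall i) (Ne.symm h)

theorem map_ofReal_mulVec_apply (v : Fin n → ℂ) (i : Fin n) :
    (A.map (fun r => (r : ℂ)) *ᵥ v) i = ∑ j, A i j • v j := by
  simp [Matrix.mulVec, dotProduct, Complex.real_smul]

theorem apply_eq_mul_of_norm_le (hA : IsDoublyStochastic A) {μ : ℂ} {v : Fin n → ℂ}
    (hv : A.map (fun r => (r : ℂ)) *ᵥ v = μ • v) (hμ : ‖μ‖ = 1) {i : Fin n}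
    (hmax : ∀ k, ‖v k‖ ≤ ‖v i‖) {j : Fin n} (hij : A i j ≠ 0) : v j = μ * v i := by
  refine eq_of_norm_le_of_sum_smul_eq (hA.1 i) (hA.2.1 i) (by simpa [hμ] using hmax) ?_ hij
  rw [← map_ofReal_mulVec_apply, hv, Pi.smul_apply, smul_eq_mul]

theorem sum_eq_zero_of_mulVec_eq_smul (hA : IsDoublyStochastic A) {μ : ℂ} {v : Fin n → ℂ}
    (hv : A.map (fun r => (r : ℂ)) *ᵥ v = μ • v) (hμ : μ ≠ 1) : ∑ i, v i = 0 := by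
  have h : μ * ∑ i, v i = ∑ i, v i := calc
    μ * ∑ i, v i = ∑ i, ∑ j, A i j • v j := by
      simp only [mul_sum, ← map_ofReal_mulVec_apply, hv, Pi.smul_apply, smul_eq_mul]
    _ = ∑ j, (∑ i, A i j) • v j := by rw [sum_comm]; simp only [sum_smul]
    _ = ∑ i, v i := by simp [hA.2.2]
  have : (μ - 1) * ∑ i, v i = 0 := by linear_combination h
  exact (mul_eq_zero.1 this).resolve_left (sub_ne_zero.2 hμ)

end IsDoublyStochastic

namespace Equiv.Perm

variable {α R : Type*} [DecidableEq α] [CommRing R]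

def orbitVector (σ : Perm α) (a : α) (μ : R) (n : ℕ) (i : α) : R :=
  ∑ k ∈ range n, if (σ ^ k) a = i then μ ^ k else 0

theorem orbitVector_apply_perm {σ : Perm α} {a : α} {μ : R} {n : ℕ} (hσ : (σ ^ n) a = a)
    (hμ : μ ^ n = 1) (i : α) : orbitVector σ a μ n (σ i) = μ * orbitVector σ a μ n i := by
  set f : ℕ → R := fun k => if (σ ^ k) a = σ i then μ ^ k else 0
  have hshift : ∀ k, f (k + 1) = μ * if (σ ^ k) a = i then μ ^ k else 0 := fun k => by
    simp only [f, pow_succ', mul_apply, σ.injective.eq_iff, mul_ite, mul_zero]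
  have hcycle : ∑ k ∈ range n, f (k + 1) = ∑ k ∈ range n, f k := by
    have h := (sum_range_succ' f n).symm.trans (sum_range_succ f n)
    rw [show f n = f 0 by simp [f, hσ, hμ]] at h
    exact add_right_cancel h
  simp only [orbitVector, mul_sum, ← hshift, hcycle, f]

theorem IsThreeCycle.exists_comp_eq_smul [Fintype α] [Nontrivial R] {σ : Perm α}
    (hσ : σ.IsThreeCycle) {μ : R} (hμ : μ ^ 3 = 1) : ∃ v : α → R, v ≠ 0 ∧ v ∘ σ = μ • v := by
  have hσ3 : σ ^ 3 = 1 := hσ.orderOf ▸ pow_orderOf_eq_one σ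
  obtain ⟨a, ha⟩ := card_pos.1 (hσ.card_support ▸ Nat.succ_pos 2 : 0 < σ.support.card)
  have h1 : σ a ≠ a := mem_support.1 ha
  have h2 : (σ ^ 2) a ≠ a := fun h => h1 <| calc
    σ a = σ ((σ ^ 2) a) := by rw [h]
    _ = a := by rw [← mul_apply, ← pow_succ', hσ3, one_apply]
  refine ⟨orbitVector σ a μ 3, fun h => ?_, funext (orbitVector_apply_perm (by simp [hσ3]) hμ)⟩
  have := congrFun h a
  simp [orbitVector, sum_range_succ, h1, h2] at this

theorem exists_isThreeCycle_apply [Fintype α] {a b c d : α} (hab : a ≠ b) (hac : a ≠ c)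
    (hbc : b ≠ c) (hda : d ≠ a) (hdb : d ≠ b) (hdc : d ≠ c) :
    ∃ σ : Perm α, σ.IsThreeCycle ∧ σ a = b ∧ σ b = c ∧ σ c = a ∧ σ d = d :=
  ⟨swap a c * swap a b, isThreeCycle_swap_mul_swap_same hac hab hbc.symm,
    by simp [swap_apply_of_ne_of_ne hab.symm hbc], by simp,
    by simp [swap_apply_of_ne_of_ne hac.symm hbc.symm],
    by simp [swap_apply_of_ne_of_ne hda hdb, swap_apply_of_ne_of_ne hda hdc]⟩

end Equiv.Perm

theorem exists_mulVec_eq_smul_of_isThreeCycle {ι : Type*} [Fintype ι] [DecidableEq ι]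
    {A : Matrix ι ι ℝ} {σ : Perm ι} (hσ : σ.IsThreeCycle)
    (hA : ∀ i j, A i j = if σ i = j then 1 else 0) {μ : ℂ} (hμ : μ ^ 3 = 1) :
    ∃ v : ι → ℂ, v ≠ 0 ∧ A.map (fun r => (r : ℂ)) *ᵥ v = μ • v := by
  obtain ⟨v, hv0, hv⟩ := hσ.exists_comp_eq_smul hμ
  have hperm : A.map (fun r => (r : ℂ)) = σ.toPEquiv.toMatrix := by
    ext i j
    simp [hA, PEquiv.toMatrix_apply, apply_ite]
  exact ⟨v, hv0, by rw [hperm, PEquiv.toMatrix_toPEquiv_mulVec, hv]⟩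

theorem Fin.exists_fourth_of_ne {a b c : Fin 4} (hab : a ≠ b) (hac : a ≠ c)
    (hbc : b ≠ c) : ∃ d, d ≠ a ∧ d ≠ b ∧ d ≠ c ∧ ∀ i, i = a ∨ i = b ∨ i = c ∨ i = d := by
  obtain ⟨d, hda, hdb, hdc⟩ : ∃ d, d ≠ a ∧ d ≠ b ∧ d ≠ c := by
    revert a b c; decide
  exact ⟨d, hda, hdb, hdc, by omega⟩

theorem IsPrimitiveRoot.mul_ne_of_three {R : Type*} [CommRing R] [IsDomain R] {μ x : R}
    (hμ : IsPrimitiveRoot μ 3) (hx : x ≠ 0) :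
    x ≠ μ * x ∧ μ * x ≠ μ * (μ * x) ∧ x ≠ μ * (μ * x) := by
  have hμx : μ * x ≠ 0 := mul_ne_zero (hμ.ne_zero (by norm_num)) hx
  exact ⟨fun h => hμ.ne_one (by norm_num) (mul_right_cancel₀ hx (by linear_combination -h)),
    fun h => hμ.ne_one (by norm_num) (mul_right_cancel₀ hμx (by linear_combination -h)),
    fun h => hμ.pow_ne_one_of_pos_of_lt (by norm_num) (by norm_num : 2 < 3)
      (mul_right_cancel₀ hx (by linear_combination -h))⟩

theorem exists_isThreeCycle_comp_eq_smul {μ : ℂ} (hμ : IsPrimitiveRoot μ 3) {v : Fin 4 → ℂ}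
    (hsum : ∑ i, v i = 0) {a b c : Fin 4} (ha : v a ≠ 0) (hb : v b = μ * v a)
    (hc : v c = μ * v b) :
    ∃ σ : Perm (Fin 4), σ.IsThreeCycle ∧ Function.Injective v ∧ v ∘ σ = μ • v ∧
      ∃ d, ∀ i ≠ d, ‖v i‖ = ‖v a‖ := by
  have hμ3 : 1 + μ + μ ^ 2 = 0 := by
    simpa [sum_range_succ] using hμ.geom_sum_eq_zero (by norm_num)
  obtain ⟨hvab, hvbc, hvac⟩ := hμ.mul_ne_of_three ha
  rw [← hb] at hvab hvbc hvac
  rw [← hc] at hvbc hvac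
  have hab := ne_of_apply_ne v hvab
  have hac := ne_of_apply_ne v hvac
  have hbc := ne_of_apply_ne v hvbc
  obtain ⟨d, hda, hdb, hdc, hcover⟩ := Fin.exists_fourth_of_ne hab hac hbc
  have hvd : v d = 0 := by
    rw [show (univ : Finset (Fin 4)) = {a, b, c, d} by ext i; simpa using hcover i,
      sum_insert (by simp [hab, hac, hda.symm]), sum_insert (by simp [hbc, hdb.symm]),
      sum_pair hdc.symm] at hsum
    linear_combination hsum - v a * hμ3 - (1 + μ) * hb - hc
  obtain ⟨σ, hσ, hσa, hσb, hσc, hσd⟩ := Perm.exists_isThreeCycle_apply hab hac hbc hda hdb hdc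
  have hnorm : ‖μ‖ = 1 := Complex.norm_eq_one_of_pow_eq_one hμ.pow_eq_one (by norm_num)
  refine ⟨σ, hσ, ?_, ?_, d, ?_⟩
  · intro i j h
    rcases hcover i with rfl | rfl | rfl | rfl <;> rcases hcover j with rfl | rfl | rfl | rfl <;>
      grind
  · funext i
    rcases hcover i with rfl | rfl | rfl | rfl
    · simpa [hσa] using hb
    · simpa [hσb] using hc
    · simp only [Function.comp_apply, hσc, Pi.smul_apply, smul_eq_mul]
      linear_combination -μ * hc - μ ^ 2 * hb - v a * hμ.pow_eq_one
    · simp [hσd, hvd]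
  · intro i hi
    rcases hcover i with rfl | rfl | rfl | rfl
    · rfl
    · simp [hb, hnorm]
    · simp [hc, hb, hnorm]
    · exact absurd rfl hi

theorem IsDoublyStochastic.isThreeCycle_of_mulVec_eq_smul {A : Matrix (Fin 4) (Fin 4) ℝ}
    (hA : IsDoublyStochastic A) {μ : ℂ} (hμ : IsPrimitiveRoot μ 3) {v : Fin 4 → ℂ} (hv0 : v ≠ 0)
    (hv : A.map (fun r => (r : ℂ)) *ᵥ v = μ • v) :
    ∃ σ : Perm (Fin 4), σ.IsThreeCycle ∧ ∀ i j, A i j = if σ i = j then 1 else 0 := by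
  have hnorm : ‖μ‖ = 1 := Complex.norm_eq_one_of_pow_eq_one hμ.pow_eq_one (by norm_num)
  obtain ⟨a, hmax⟩ := Finite.exists_max fun i => ‖v i‖
  have ha : v a ≠ 0 := fun h =>
    hv0 <| funext fun i => norm_le_zero_iff.1 (by simpa [h] using hmax i)
  have hmax_of_eq : ∀ i, ‖v i‖ = ‖v a‖ → ∀ k, ‖v k‖ ≤ ‖v i‖ := fun i hi k => hi ▸ hmax k
  have hnext : ∀ i, ‖v i‖ = ‖v a‖ → ∃ j, v j = μ * v i := fun i hi => by
    obtain ⟨j, -, hj⟩ := exists_ne_zero_of_sum_ne_zero (hA.2.1 i ▸ one_ne_zero)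
    exact ⟨j, hA.apply_eq_mul_of_norm_le hv hnorm (hmax_of_eq i hi) hj⟩
  obtain ⟨b, hb⟩ := hnext a rfl
  obtain ⟨c, hc⟩ := hnext b (by simp [hb, hnorm])
  obtain ⟨σ, hσ, hinj, hσv, d, hd⟩ := exists_isThreeCycle_comp_eq_smul hμ
    (hA.sum_eq_zero_of_mulVec_eq_smul hv (hμ.ne_one (by norm_num))) ha hb hc
  refine ⟨σ, hσ, hA.apply_eq_ite_of_forall_ne σ d fun i hi =>
    eq_one_of_sum_eq_one_of_support (hA.2.1 i) fun j hj => hinj ?_⟩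
  rw [hA.apply_eq_mul_of_norm_le hv hnorm (hmax_of_eq i (hd i hi)) hj]
  exact (congrFun hσv i).symm

theorem IsDoublyStochastic.exists_mulVec_eq_smul_iff {A : Matrix (Fin 4) (Fin 4) ℝ}
    (hA : IsDoublyStochastic A) {μ : ℂ} (hμ : IsPrimitiveRoot μ 3) :
    (∃ v : Fin 4 → ℂ, v ≠ 0 ∧ A.map (fun r => (r : ℂ)) *ᵥ v = μ • v) ↔
      ∃ σ : Perm (Fin 4), σ.IsThreeCycle ∧ ∀ i j, A i j = if σ i = j then 1 else 0 :=
  ⟨fun ⟨_, hv0, hv⟩ => hA.isThreeCycle_of_mulVec_eq_smul hμ hv0 hv,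
    fun ⟨_, hσ, hAσ⟩ => exists_mulVec_eq_smul_of_isThreeCycle hσ hAσ hμ.pow_eq_one⟩

theorem isPrimitiveRoot_neg_half_add_sqrt_three_div_two_mul_I :
    IsPrimitiveRoot (-(1 / 2) + ((Real.sqrt 3 / 2 : ℝ) : ℂ) * Complex.I) 3 := by
  have h3 : (Real.sqrt 3 : ℂ) ^ 2 = 3 := by
    exact_mod_cast Real.sq_sqrt (by norm_num : (0 : ℝ) ≤ 3)
  refine isPrimitiveRoot_of_mem_nthRootsFinset Nat.prime_three
    ((Polynomial.mem_nthRootsFinset (by norm_num) _).2 ?_) fun h => ?_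
  · push_cast
    linear_combination (-3 / 8 * Complex.I ^ 2 + 1 / 8 * Real.sqrt 3 * Complex.I ^ 3) * h3 +
      (-9 / 8 + 3 / 8 * Real.sqrt 3 * Complex.I) * Complex.I_sq
  · norm_num [Complex.ext_iff] at h

theorem stmt7 (A : Matrix (Fin 4) (Fin 4) ℝ) (hA : IsDoublyStochastic A) :
    (∃ v : Fin 4 → ℂ, v ≠ 0 ∧
        (A.map (fun r => (r : ℂ))).mulVec v
          = (-(1 / 2) + ((Real.sqrt 3 / 2 : ℝ) : ℂ) * Complex.I) • v) ↔
    ∃ σ : Equiv.Perm (Fin 4), σ.IsThreeCycle ∧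
      ∀ i j, A i j = if σ i = j then 1 else 0 :=
  hA.exists_mulVec_eq_smul_iff isPrimitiveRoot_neg_half_add_sqrt_three_div_two_mul_I
end

section
/- For every σ ∈ [−1/2, 1] and τ with σ + √3·|τ| ≤ 1, the 4×4 matrix with upper-left 3×3 block the circulant with first row ((1+2σ)/3, (1−σ−√3 τ)/3, (1−σ+√3 τ)/3), lower-right entry 1, and zeros elsewhere, is doubly stochastic and has spectrum {1, 1, σ + τi, σ − τi}. -/
/-!
The upper-left block is circulant, so its eigenvalues are `1 = a + b + c` and the conjugate pair
`a + b ω + c ω²`, `a + b ω² + c ω`. Over `ℝ` this pair is the quadratic factor with trace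
`2a - b - c` and norm `a² + b² + c² - ab - bc - ca`, which for the given row are `2σ` and `σ² + τ²`.
The entries are nonnegative because `σ ≥ -1/2` and `|√3 τ| ≤ 1 - σ`.
-/

open Polynomial

/-- The 4×4 matrix with a 3×3 circulant block with first row `(a,b,c)` and a final `1`. -/
def Mmat (a b c : ℝ) : Matrix (Fin 4) (Fin 4) ℝ :=
  !![a, b, c, 0; c, a, b, 0; b, c, a, 0; 0, 0, 0, 1]

theorem isDoublyStochastic_Mmat {a b c : ℝ} (ha : 0 ≤ a) (hb : 0 ≤ b) (hc : 0 ≤ c)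
    (habc : a + b + c = 1) : IsDoublyStochastic (Mmat a b c) := by
  refine ⟨fun i j => ?_, fun i => ?_, fun j => ?_⟩
  · fin_cases i <;> fin_cases j <;> simp [Mmat, *]
  · fin_cases i <;> simp [Mmat, Fin.sum_univ_four] <;> linarith
  · fin_cases j <;> simp [Mmat, Fin.sum_univ_four] <;> linarith

theorem charpoly_Mmat (a b c : ℝ) :
    (Mmat a b c).charpoly = (X - 1) * (X - C (a + b + c)) *
      (X ^ 2 - C (2 * a - b - c) * X + C (a ^ 2 + b ^ 2 + c ^ 2 - a * b - b * c - c * a)) := by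
  rw [Matrix.charpoly, Matrix.det_succ_column _ 3]
  simp only [Fin.sum_univ_four, Matrix.charmatrix_apply, Mmat, Matrix.det_fin_three, Fin.succAbove,
    Matrix.submatrix, Matrix.of_apply, Matrix.cons_val', Matrix.cons_val, Matrix.cons_val_fin_one,
    Matrix.diagonal_apply_ne, Matrix.diagonal_apply_eq, Fin.isValue, Fin.coe_ofNat_eq_mod,
    Fin.reduceLT, Fin.reduceCastSucc, Fin.reduceSucc, Fin.reduceEq, ne_eq, not_false_eq_true,
    ↓reduceIte, map_zero, map_one, map_add, map_sub, map_mul, map_ofNat, map_pow]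
  ring

theorem X_sq_sub_C_mul_X_add_C_eq_mul_conj (s t : ℝ) :
    (X ^ 2 - C ((2 * s : ℝ) : ℂ) * X + C ((s ^ 2 + t ^ 2 : ℝ) : ℂ) : ℂ[X]) =
      (X - C ((s : ℂ) + (t : ℂ) * Complex.I)) * (X - C ((s : ℂ) - (t : ℂ) * Complex.I)) := by
  have hI : (C Complex.I : ℂ[X]) ^ 2 = -1 := by rw [← map_pow, Complex.I_sq, map_neg, map_one]
  simp only [Complex.ofReal_mul, Complex.ofReal_add, Complex.ofReal_pow, Complex.ofReal_ofNat,
    map_add, map_sub, map_mul, map_pow, map_ofNat]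
  linear_combination C (t : ℂ) ^ 2 * hI

theorem charpoly_map_ofReal_Mmat {a b c s t : ℝ} (hsum : a + b + c = 1)
    (htrace : 2 * a - b - c = 2 * s)
    (hnorm : a ^ 2 + b ^ 2 + c ^ 2 - a * b - b * c - c * a = s ^ 2 + t ^ 2) :
    ((Mmat a b c).map (fun r => (r : ℂ))).charpoly =
      (X - C 1) ^ 2 * (X - C ((s : ℂ) + (t : ℂ) * Complex.I)) *
        (X - C ((s : ℂ) - (t : ℂ) * Complex.I)) := by
  change ((Mmat a b c).map Complex.ofRealHom).charpoly = _
  rw [Matrix.charpoly_map, charpoly_Mmat, hsum, htrace, hnorm]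
  simp only [Polynomial.map_mul, Polynomial.map_sub, Polynomial.map_add, Polynomial.map_pow,
    Polynomial.map_one, map_X, map_C, Complex.ofRealHom_eq_coe]
  rw [X_sq_sub_C_mul_X_add_C_eq_mul_conj, Complex.ofReal_one, map_one]
  ring

theorem stmt8 (s t : ℝ) (hs : s ∈ Set.Icc (-(1 / 2) : ℝ) 1)
    (ht : s + Real.sqrt 3 * |t| ≤ 1) :
    IsDoublyStochastic
      (Mmat ((1 + 2 * s) / 3) ((1 - s - Real.sqrt 3 * t) / 3) ((1 - s + Real.sqrt 3 * t) / 3)) ∧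
    ((Mmat ((1 + 2 * s) / 3) ((1 - s - Real.sqrt 3 * t) / 3)
        ((1 - s + Real.sqrt 3 * t) / 3)).map (fun r => (r : ℂ))).charpoly =
      (X - C 1) ^ 2 * (X - C ((s : ℂ) + (t : ℂ) * Complex.I)) *
        (X - C ((s : ℂ) - (t : ℂ) * Complex.I)) := by
  have hsqrt3 : Real.sqrt 3 ^ 2 = 3 := Real.sq_sqrt (by norm_num)
  have hbound : |Real.sqrt 3 * t| ≤ 1 - s := by
    rw [abs_mul, abs_of_nonneg (Real.sqrt_nonneg 3)]
    linarith
  obtain ⟨hlower, hupper⟩ := abs_le.mp hbound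
  exact ⟨isDoublyStochastic_Mmat (by linarith [hs.1]) (by linarith) (by linarith) (by ring),
    charpoly_map_ofReal_Mmat (by ring) (by ring) (by linear_combination (t ^ 2 / 3) * hsqrt3)⟩
end
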